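/- Let p_S denote the number of permutations in S_{n+1} with peak set S. Then the vector (p_S) indexed by left sparse S ⊆ [n] is an eigenvector with eigenvalue 2^{n+1} of the linear map whose matrix entries are 2^{|S|+1} η_{T,S}: that is, for every left sparse T ⊆ [n], Σ_{S left sparse} 2^{|S|+1} η_{T,S} p_S = 2^{n+1} p_T, where η_{T,S} = #{R ⊆ [n] : R, [n]\R ∈ b[I^S], Λ(R) = T}. -/

import Mathlib

/-- `S ⊆ [n]` is left sparse if `1 ∉ S` and `i ∈ S` implies `i-1 ∉ S`. -/
def LeftSparse (n : ℕ) (S : Finset ℕ) : Prop :=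
  S ⊆ Finset.Icc 1 n ∧ 1 ∉ S ∧ ∀ i ∈ S, i - 1 ∉ S

instance (n : ℕ) : DecidablePred (LeftSparse n) := fun _ => by
  unfold LeftSparse; infer_instance

/-- `R ∈ b[I^S]` for left sparse `S`: `R` meets every pair `{i-1, i}`, `i ∈ S`. -/
def blocksS (S R : Finset ℕ) : Prop := ∀ i ∈ S, i - 1 ∈ R ∨ i ∈ R

instance (S R : Finset ℕ) : Decidable (blocksS S R) := by
  unfold blocksS; infer_instance

/-- `Λ(R) = {i ∈ R : i ≠ 1, i-1 ∉ R}`. -/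
def Lam (R : Finset ℕ) : Finset ℕ := R.filter (fun i => i ≠ 1 ∧ i - 1 ∉ R)

/-- `η_{T,S} = #{R ⊆ [n] : R, [n]\R ∈ b[I^S], Λ(R) = T}`. -/
def eta (n : ℕ) (T S : Finset ℕ) : ℕ :=
  ((Finset.Icc 1 n).powerset.filter
    (fun R => blocksS S R ∧ blocksS S (Finset.Icc 1 n \ R) ∧ Lam R = T)).card

/-- The peak set of a permutation `π` of `{1,…,n+1}` (written on `Fin (n+1)`,
position `i ∈ {1,…,n+1}` corresponding to `i - 1 : Fin (n+1)`):
`{i ∈ {2,…,n} : π(i-1) < π(i) > π(i+1)}`. -/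
def peakSet (n : ℕ) (π : Equiv.Perm (Fin (n + 1))) : Finset ℕ :=
  (Finset.Icc 2 n).filter (fun i => ∃ a b c : Fin (n + 1),
    (a : ℕ) = i - 2 ∧ (b : ℕ) = i - 1 ∧ (c : ℕ) = i ∧ π a < π b ∧ π c < π b)

/-- `p_S`: the number of permutations in `S_{n+1}` with peak set `S`. -/
def pCount (n : ℕ) (S : Finset ℕ) : ℕ :=
  (Finset.univ.filter (fun π : Equiv.Perm (Fin (n + 1)) => peakSet n π = S)).card

/-!
Since the peak set of `π` is `Λ(Des π)`, the theorem follows by summing over `R` with `Λ(R) = T`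
the identity `∑_π 2^{|pk π|+1} [R splits every pair {i-1, i}, i ∈ pk π] = 2^{n+1} #{π : Des π = R}`.
Inclusion–exclusion over the (disjoint) peak pairs, followed by Möbius inversion over `E ⊆ R`,
reduces it to `2^{|E|+1} #{π : E meets every peak pair of π} = 2^{n+1} #{π : Des π ⊆ E}`, which is a
double count of permutations with a valley marking: in every block of positions cut at `E` the
permutation first falls, then rises, and a marked set of values (the rising side) is chosen.
Grouped by permutation, each of the `|E| + 1` blocks has exactly two markings when it has no peak;
grouped by the marked set `W ⊆ [0, n]`, sorting each block increasingly is a bijection with the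
permutations whose descents lie in `E`.
-/

namespace PeakEigenvector

open Finset

section Descents

variable {n : ℕ} (π : Equiv.Perm (Fin (n + 1)))

/-- The value of `π` at the `0`-indexed position `j`, with the junk value `0` for `j > n`. -/
def valAt (j : ℕ) : ℕ := if h : j < n + 1 then π ⟨j, h⟩ else 0

/-- A descent `π(i) > π(i + 1)` in the paper's `1`-indexed positions. -/
def IsDescent (i : ℕ) : Prop := valAt π i < valAt π (i - 1)

instance (i : ℕ) : Decidable (IsDescent π i) := by unfold IsDescent; infer_instance

def descentSet (n : ℕ) (π : Equiv.Perm (Fin (n + 1))) : Finset ℕ := {i ∈ Icc 1 n | IsDescent π i}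

lemma valAt_of_lt {j : ℕ} (h : j < n + 1) : valAt π j = π ⟨j, h⟩ := dif_pos h

@[simp] lemma valAt_val (x : Fin (n + 1)) : valAt π x = π x := dif_pos x.isLt

def peaksOf (n : ℕ) (d : ℕ → Prop) [DecidablePred d] : Finset ℕ :=
  {i ∈ Icc 2 n | ¬ d (i - 1) ∧ d i}

lemma peakSet_eq_peaksOf : peakSet n π = peaksOf n (IsDescent π) := by
  ext i
  simp only [peakSet, peaksOf, mem_filter, mem_Icc]
  unfold IsDescent
  constructor
  · rintro ⟨hi, a, b, c, ha, hb, hc, hab, hcb⟩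
    refine ⟨hi, ?_⟩
    rw [show i - 1 - 1 = i - 2 by omega, ← ha, ← hb, ← hc]
    simp only [valAt_val, Fin.val_fin_lt, not_lt]
    exact ⟨hab.le, hcb⟩
  · rintro ⟨hi, hab, hcb⟩
    refine ⟨hi, ⟨i - 2, by omega⟩, ⟨i - 1, by omega⟩, ⟨i, by omega⟩, rfl, rfl, rfl, ?_, ?_⟩
    · rw [show i - 1 - 1 = i - 2 by omega, valAt_of_lt π (show i - 1 < n + 1 by omega),
        valAt_of_lt π (show i - 2 < n + 1 by omega), Fin.val_fin_lt] at hab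
      refine lt_of_le_of_ne (not_lt.1 hab) fun h => ?_
      have := π.injective h
      simp only [Fin.mk.injEq] at this
      omega
    · rwa [valAt_of_lt π (show i < n + 1 by omega), valAt_of_lt π (show i - 1 < n + 1 by omega),
        Fin.val_fin_lt] at hcb

lemma peakSet_eq_Lam : peakSet n π = Lam (descentSet n π) := by
  ext i
  simp only [peakSet_eq_peaksOf, peaksOf, Lam, descentSet, mem_filter, mem_Icc]
  constructor
  · rintro ⟨hi, ha, hd⟩
    exact ⟨⟨⟨by omega, hi.2⟩, hd⟩, by omega, fun h => ha h.2⟩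
  · rintro ⟨⟨hi, hd⟩, h1, ha⟩
    exact ⟨⟨by omega, hi.2⟩, fun h => ha ⟨⟨by omega, by omega⟩, h⟩, hd⟩

lemma leftSparse_Lam {R : Finset ℕ} (hR : R ⊆ Icc 1 n) : LeftSparse n (Lam R) :=
  ⟨fun _ hi => hR (mem_filter.1 hi).1, fun h => (mem_filter.1 h).2.1 rfl,
    fun _ hi hi' => (mem_filter.1 hi).2.2 (mem_filter.1 hi').1⟩

lemma leftSparse_peakSet : LeftSparse n (peakSet n π) := by
  rw [peakSet_eq_Lam]
  exact leftSparse_Lam (filter_subset _ _)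

end Descents

section ValleyMarkings

def SignRule (a b di : Prop) : Prop := (a → b) ∧ (¬ a → ¬ b → di) ∧ (a → b → ¬ di)

instance {a b di : Prop} [Decidable a] [Decidable b] [Decidable di] :
    Decidable (SignRule a b di) := by
  unfold SignRule; infer_instance

variable (d : ℕ → Prop)

/-- Within each block of positions `{0, …, n}` cut just before the elements of `E`, a valley
marking `V` is a final segment of the block, the pattern `d` descends on the unmarked part and
ascends on the marked part. -/
def IsValleyMarking (n : ℕ) (E V : Finset ℕ) : Prop :=
  ∀ i ∈ Icc 1 n, i ∉ E → SignRule (i - 1 ∈ V) (i ∈ V) (d i)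

instance (n : ℕ) (E V : Finset ℕ) [DecidablePred d] : Decidable (IsValleyMarking d n E V) := by
  unfold IsValleyMarking; infer_instance

/-- Every position of the last block is a descent. -/
def TrailingDescents (n : ℕ) (E : Finset ℕ) : Prop := ∀ i ∈ Icc 1 n, (∀ e ∈ E, e < i) → d i

variable {d}

lemma isValleyMarking_zero (E V : Finset ℕ) : IsValleyMarking d 0 E V := by
  simp [IsValleyMarking]

lemma isValleyMarking_succ {n : ℕ} {E V : Finset ℕ} :
    IsValleyMarking d (n + 1) E V ↔
      IsValleyMarking d n E V ∧ (n + 1 ∉ E → SignRule (n ∈ V) (n + 1 ∈ V) (d (n + 1))) := by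
  simp only [IsValleyMarking, mem_Icc]
  constructor
  · intro h
    exact ⟨fun i hi => h i (by omega), h (n + 1) (by omega)⟩
  · rintro ⟨h, hn⟩ i hi
    rcases (show i ≤ n ∨ i = n + 1 by omega) with hi' | rfl
    · exact h i ⟨hi.1, hi'⟩
    · exact hn

lemma isValleyMarking_congr {n : ℕ} {E E' V V' : Finset ℕ}
    (hE : ∀ i ≤ n, i ∈ E ↔ i ∈ E') (hV : ∀ i ≤ n, i ∈ V ↔ i ∈ V') :
    IsValleyMarking d n E V ↔ IsValleyMarking d n E' V' := by
  unfold IsValleyMarking SignRule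
  refine forall₂_congr fun i hi => ?_
  rw [mem_Icc] at hi
  rw [hE i hi.2, hV i hi.2, hV (i - 1) (by omega)]

lemma exists_not_and_succ {P : ℕ → Prop} {a b : ℕ} (hab : a ≤ b) (ha : ¬ P a) (hb : P b) :
    ∃ k, a ≤ k ∧ k < b ∧ ¬ P k ∧ P (k + 1) := by
  induction b, hab using Nat.le_induction with
  | base => exact absurd hb ha
  | succ b hab ih =>
    by_cases h : P b
    · obtain ⟨k, hk⟩ := ih h
      exact ⟨k, hk.1, by omega, hk.2.2⟩
    · exact ⟨b, hab, by omega, h, hb⟩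

lemma trailingDescents_succ {n : ℕ} {E : Finset ℕ} (hE : E ⊆ Icc 1 n) :
    TrailingDescents d (n + 1) E ↔ TrailingDescents d n E ∧ d (n + 1) := by
  have hEn : ∀ e ∈ E, e < n + 1 := fun e he => Nat.lt_succ_of_le (mem_Icc.1 (hE he)).2
  simp only [TrailingDescents, mem_Icc]
  constructor
  · exact fun h => ⟨fun i hi => h i (by omega), h (n + 1) (by omega) hEn⟩
  · rintro ⟨h, hn⟩ i hi hlt
    rcases (show i ≤ n ∨ i = n + 1 by omega) with hi' | rfl
    exacts [h i ⟨hi.1, hi'⟩ hlt, hn]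

lemma trailingDescents_of_mem {n : ℕ} {E : Finset ℕ} (h : n ∈ E) : TrailingDescents d n E :=
  fun i hi hlt => absurd (hlt n h) (by simp only [mem_Icc] at hi; omega)

variable [DecidablePred d]

instance (n : ℕ) (E : Finset ℕ) : Decidable (TrailingDescents d n E) := by
  unfold TrailingDescents; infer_instance

lemma blocksS_peaksOf_succ_of_mem {n : ℕ} {E : Finset ℕ} (h : n + 1 ∈ E) :
    blocksS (peaksOf (n + 1) d) E ↔ blocksS (peaksOf n d) (E.erase (n + 1)) := by
  simp only [blocksS, peaksOf, mem_filter, mem_Icc, mem_erase, and_imp]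
  constructor
  · intro hb i h2 hi ha hd
    rcases hb i h2 (by omega) ha hd with h | h
    exacts [Or.inl ⟨by omega, h⟩, Or.inr ⟨by omega, h⟩]
  · intro hb i h2 hi ha hd
    rcases (show i ≤ n ∨ i = n + 1 by omega) with hi' | rfl
    · have := hb i h2 hi' ha hd
      tauto
    · exact Or.inr h

lemma blocksS_peaksOf_succ_of_descent {n : ℕ} {E : Finset ℕ} (hE : E ⊆ Icc 1 n)
    (hd : d (n + 1)) :
    blocksS (peaksOf (n + 1) d) E ↔ blocksS (peaksOf n d) E ∧ TrailingDescents d n E := by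
  have hEn : ∀ e ∈ E, e ≤ n := fun e he => (mem_Icc.1 (hE he)).2
  simp only [blocksS, TrailingDescents, peaksOf, mem_filter, mem_Icc, and_imp]
  constructor
  · intro hb
    refine ⟨fun i h2 hi => hb i h2 (by omega), fun i hi1 hin hlt => by_contra fun hdi => ?_⟩
    obtain ⟨k, hik, hkn, hk, hk1⟩ := exists_not_and_succ (show i ≤ n + 1 by omega) hdi hd
    have := hb (k + 1) (by omega) (by omega) (by simpa using hk) hk1
    simp only [Nat.add_sub_cancel] at this
    rcases this with h | h <;> [have := hlt k h; have := hlt (k + 1) h] <;> omega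
  · rintro ⟨hb, htd⟩ i h2 hi ha hdi
    rcases (show i ≤ n ∨ i = n + 1 by omega) with hi' | rfl
    · exact hb i h2 hi' ha hdi
    · by_contra hne
      refine ha (htd n (by omega) le_rfl fun e he => lt_of_le_of_ne (hEn e he) ?_)
      rintro rfl
      exact hne (Or.inl he)

lemma blocksS_peaksOf_succ_of_ascent {n : ℕ} {E : Finset ℕ} (hd : ¬ d (n + 1)) :
    blocksS (peaksOf (n + 1) d) E ↔ blocksS (peaksOf n d) E := by
  simp only [blocksS, peaksOf, mem_filter, mem_Icc, and_imp]
  constructor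
  · exact fun hb i h2 hi => hb i h2 (by omega)
  · intro hb i h2 hi ha hdi
    rcases (show i ≤ n ∨ i = n + 1 by omega) with hi' | rfl
    · exact hb i h2 hi' ha hdi
    · exact absurd hdi hd

lemma signRule_false_right {a di : Prop} : SignRule a False di ↔ ¬ a ∧ di := by
  unfold SignRule; tauto

lemma signRule_true_right {a di : Prop} : SignRule a True di ↔ (a → ¬ di) := by
  unfold SignRule; tauto

lemma erase_subset_Icc_of_subset_Icc_succ {n : ℕ} {E : Finset ℕ} (hE : E ⊆ Icc 1 (n + 1)) :
    E.erase (n + 1) ⊆ Icc 1 n := fun e he => by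
  have := mem_Icc.1 (hE (mem_of_mem_erase he))
  exact mem_Icc.2 ⟨this.1, Nat.le_of_lt_succ (lt_of_le_of_ne this.2 (ne_of_mem_erase he))⟩

lemma card_filter_powerset_range_succ (n : ℕ) (p : Finset ℕ → Prop) [DecidablePred p] :
    #{V ∈ (range (n + 2)).powerset | p V} =
      #{V ∈ (range (n + 1)).powerset | p V} +
        #{V ∈ (range (n + 1)).powerset | p (insert (n + 1) V)} := by
  simp only [card_filter]
  rw [range_add_one (n := n + 1), sum_powerset_insert notMem_range_self]

lemma card_valleyMarkings_succ (n : ℕ) (E : Finset ℕ) :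
    #{V ∈ (range (n + 2)).powerset | IsValleyMarking d (n + 1) E V ∧ n + 1 ∉ V} =
      #{V ∈ (range (n + 1)).powerset | IsValleyMarking d n E V ∧ (n + 1 ∉ E → n ∉ V ∧ d (n + 1))} ∧
    #{V ∈ (range (n + 2)).powerset | IsValleyMarking d (n + 1) E V} =
      #{V ∈ (range (n + 1)).powerset | IsValleyMarking d n E V ∧ (n + 1 ∉ E → n ∉ V ∧ d (n + 1))} +
      #{V ∈ (range (n + 1)).powerset |
        IsValleyMarking d n E V ∧ (n + 1 ∉ E → n ∈ V → ¬ d (n + 1))} := by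
  have hlow : ∀ V ∈ (range (n + 1)).powerset, n + 1 ∉ V := fun V hV h => by
    simpa using mem_powerset.1 hV h
  have hins : ∀ V, IsValleyMarking d n E (insert (n + 1) V) ↔ IsValleyMarking d n E V :=
    fun V => isValleyMarking_congr (fun _ _ => Iff.rfl) fun i hi => by simp [mem_insert]; omega
  have hn : ∀ V : Finset ℕ, n ∈ insert (n + 1) V ↔ n ∈ V := fun V => by simp
  have hfst : #{V ∈ (range (n + 1)).powerset | IsValleyMarking d (n + 1) E V} =
      #{V ∈ (range (n + 1)).powerset |
        IsValleyMarking d n E V ∧ (n + 1 ∉ E → n ∉ V ∧ d (n + 1))} := by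
    refine congrArg card (filter_congr fun V hV => ?_)
    simp only [isValleyMarking_succ, iff_false_intro (hlow V hV), signRule_false_right]
  have hsnd : #{V ∈ (range (n + 1)).powerset | IsValleyMarking d (n + 1) E (insert (n + 1) V)} =
      #{V ∈ (range (n + 1)).powerset |
        IsValleyMarking d n E V ∧ (n + 1 ∉ E → n ∈ V → ¬ d (n + 1))} := by
    refine congrArg card (filter_congr fun V _ => ?_)
    simp only [isValleyMarking_succ, hins, hn, iff_true_intro (mem_insert_self _ _),
      signRule_true_right]
  rw [card_filter_powerset_range_succ, card_filter_powerset_range_succ, hsnd, ← hfst]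
  simp only [mem_insert_self, not_true_eq_false, and_false, filter_false, card_empty, add_zero]
  exact ⟨congrArg card (filter_congr fun V hV => and_iff_left (hlow V hV)), trivial⟩

/-- The count of markings leaving `n` unmarked is the invariant that makes the induction go. -/
theorem card_unmarked_last_and_card_valleyMarkings (n : ℕ) (E : Finset ℕ) (hE : E ⊆ Icc 1 n) :
    #{V ∈ (range (n + 1)).powerset | IsValleyMarking d n E V ∧ n ∉ V} =
      (if blocksS (peaksOf n d) E ∧ TrailingDescents d n E then 2 ^ #E else 0) ∧
    #{V ∈ (range (n + 1)).powerset | IsValleyMarking d n E V} =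
      if blocksS (peaksOf n d) E then 2 ^ (#E + 1) else 0 := by
  induction n generalizing E with
  | zero =>
    obtain rfl : E = ∅ := subset_empty.1 (by simpa using hE)
    have hb : blocksS (peaksOf 0 d) ∅ := by simp [blocksS, peaksOf]
    have ht : TrailingDescents d 0 ∅ := by simp [TrailingDescents]
    simp only [isValleyMarking_zero, true_and, filter_true, hb, ht, if_true]
    decide
  | succ n ih =>
    obtain ⟨hZ, hA⟩ := card_valleyMarkings_succ (d := d) n E
    by_cases hmem : n + 1 ∈ E
    · have hE' := erase_subset_Icc_of_subset_Icc_succ hE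
      have hcongr : #{V ∈ (range (n + 1)).powerset | IsValleyMarking d n E V} =
          #{V ∈ (range (n + 1)).powerset | IsValleyMarking d n (E.erase (n + 1)) V} :=
        congrArg card (filter_congr fun V _ => isValleyMarking_congr
          (fun i hi => by rw [mem_erase]; exact ⟨fun h => ⟨by omega, h⟩, And.right⟩)
          fun _ _ => Iff.rfl)
      have hcard : #E = #(E.erase (n + 1)) + 1 := (card_erase_add_one hmem).symm
      simp only [hmem, not_true_eq_false, IsEmpty.forall_iff, and_true] at hZ hA
      rw [hZ, hA, hcongr, (ih _ hE').2]
      simp only [blocksS_peaksOf_succ_of_mem hmem, trailingDescents_of_mem (d := d) hmem, and_true,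
        hcard]
      split_ifs <;> simp [pow_succ, mul_two]
    · have hE' : E ⊆ Icc 1 n := erase_eq_of_notMem hmem ▸ erase_subset_Icc_of_subset_Icc_succ hE
      obtain ⟨ihZ, ihA⟩ := ih E hE'
      simp only [hmem, not_false_eq_true, forall_const] at hZ hA
      by_cases hd : d (n + 1)
      · simp only [hd, and_true, not_true_eq_false, imp_false] at hZ hA
        rw [hZ, hA, ihZ]
        simp only [blocksS_peaksOf_succ_of_descent hE' hd, trailingDescents_succ hE', hd, and_true,
          and_assoc, and_self]
        split_ifs <;> simp [pow_succ, mul_two]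
      · simp only [hd, and_false, filter_false, card_empty, not_false_eq_true, imp_true_iff,
          and_true, zero_add] at hZ hA
        rw [hZ, hA, ihA]
        simp [blocksS_peaksOf_succ_of_ascent hd, trailingDescents_succ hE', hd]

theorem card_valleyMarkings (n : ℕ) (E : Finset ℕ) (hE : E ⊆ Icc 1 n) :
    #{V ∈ (range (n + 1)).powerset | IsValleyMarking d n E V} =
      if blocksS (peaksOf n d) E then 2 ^ (#E + 1) else 0 :=
  (card_unmarked_last_and_card_valleyMarkings n E hE).2

end ValleyMarkings

lemma _root_.Tuple.eq_sort_of_strictMono {m : ℕ} {α : Type*} [LinearOrder α] {f : Fin m → α}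
    {σ : Equiv.Perm (Fin m)} (h : StrictMono (f ∘ σ)) : σ = Tuple.sort f :=
  Tuple.eq_sort_iff.2 ⟨h.monotone, fun _ _ hij he => absurd he (h hij).ne⟩

lemma _root_.Tuple.strictMono_comp_sort {m : ℕ} {α : Type*} [LinearOrder α] {f : Fin m → α}
    (hf : Function.Injective f) : StrictMono (f ∘ Tuple.sort f) :=
  (Tuple.monotone_sort f).strictMono_of_injective (hf.comp (Tuple.sort f).injective)

section BlockwiseSort

variable {n : ℕ} (E : Finset ℕ)

/-- The index of the block containing position `p`, blocks being cut just before the elements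
of `E`. -/
def blockIdx (p : ℕ) : ℕ := #{e ∈ E | e ≤ p}

lemma blockIdx_mono : Monotone (blockIdx E) := fun _ _ h =>
  card_le_card (monotone_filter_right _ fun _ _ he => he.trans h)

lemma blockIdx_succ (p : ℕ) : blockIdx E (p + 1) = blockIdx E p + if p + 1 ∈ E then 1 else 0 := by
  have : {e ∈ E | e ≤ p + 1} = {e ∈ E | e ≤ p} ∪ {e ∈ E | e = p + 1} := by
    ext e
    by_cases he : e ∈ E <;> simp [he]
    omega
  rw [blockIdx, this, card_union_of_disjoint (disjoint_filter.2 fun _ _ h h' => by omega),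
    filter_eq']
  split_ifs <;> simp [blockIdx]

def RankAscending (r : Fin (n + 1) → ℤ) (π : Equiv.Perm (Fin (n + 1))) : Prop :=
  ∀ p : Fin n, (p : ℕ) + 1 ∉ E → r (π p.castSucc) < r (π p.succ)

instance (r : Fin (n + 1) → ℤ) (π : Equiv.Perm (Fin (n + 1))) :
    Decidable (RankAscending E r π) := by
  unfold RankAscending; infer_instance

def blockKey (π : Equiv.Perm (Fin (n + 1))) (r : Fin (n + 1) → ℤ) (x : Fin (n + 1)) : ℕ ×ₗ ℤ :=
  toLex (blockIdx E (π⁻¹ x), r x)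

/-- Rearranges the values inside each block of `π` in increasing order of rank. -/
def blockwiseSort (π : Equiv.Perm (Fin (n + 1))) (r : Fin (n + 1) → ℤ) : Equiv.Perm (Fin (n + 1)) :=
  Tuple.sort (blockKey E π r)

variable {E}

@[simp] lemma blockKey_apply_self (π : Equiv.Perm (Fin (n + 1))) (r : Fin (n + 1) → ℤ)
    (q : Fin (n + 1)) :
    blockKey E π r (π q) = toLex (blockIdx E q, r (π q)) := by
  simp [blockKey]

lemma blockKey_injective (π : Equiv.Perm (Fin (n + 1))) {r : Fin (n + 1) → ℤ}
    (hr : Function.Injective r) : Function.Injective (blockKey E π r) :=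
  fun _ _ h => hr (congrArg (fun k => (ofLex k).2) h)

lemma blockIdx_blockwiseSort (π : Equiv.Perm (Fin (n + 1))) (r : Fin (n + 1) → ℤ)
    (x : Fin (n + 1)) :
    blockIdx E ((blockwiseSort E π r)⁻¹ x) = blockIdx E (π⁻¹ x) := by
  set τ := blockwiseSort E π r
  let c : Fin (n + 1) → ℕ := fun x => blockIdx E (π⁻¹ x)
  have hτ : Monotone (c ∘ τ) := fun _ _ h =>
    Prod.Lex.monotone_fst _ _ (Tuple.monotone_sort (blockKey E π r) h)
  have hπ : Monotone (c ∘ π) := fun a b h => by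
    simpa [c] using blockIdx_mono E (Fin.le_def.1 h)
  have := congrFun (Tuple.unique_monotone hτ hπ) (τ⁻¹ x)
  simpa [c] using this.symm

lemma blockKey_blockwiseSort (π : Equiv.Perm (Fin (n + 1))) (r r' : Fin (n + 1) → ℤ) :
    blockKey E (blockwiseSort E π r) r' = blockKey E π r' :=
  funext fun x => by simp only [blockKey, blockIdx_blockwiseSort]

lemma blockwiseSort_blockwiseSort (π : Equiv.Perm (Fin (n + 1))) (r r' : Fin (n + 1) → ℤ) :
    blockwiseSort E (blockwiseSort E π r) r' = blockwiseSort E π r' :=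
  congrArg Tuple.sort (blockKey_blockwiseSort π r r')

lemma rankAscending_blockwiseSort (π : Equiv.Perm (Fin (n + 1))) {r : Fin (n + 1) → ℤ}
    (hr : Function.Injective r) : RankAscending E r (blockwiseSort E π r) := by
  intro p hp
  have h : blockKey E π r (blockwiseSort E π r p.castSucc) <
      blockKey E π r (blockwiseSort E π r p.succ) :=
    Tuple.strictMono_comp_sort (blockKey_injective π hr) Fin.castSucc_lt_succ
  have key : ∀ q, blockKey E π r (blockwiseSort E π r q) =
      toLex (blockIdx E q, r (blockwiseSort E π r q)) := fun q => by
    rw [blockKey, ← blockIdx_blockwiseSort π r]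
    simp
  rw [key, key, Prod.Lex.toLex_lt_toLex] at h
  simpa [blockIdx_succ, hp] using h

lemma eq_blockwiseSort_of_rankAscending {π : Equiv.Perm (Fin (n + 1))} {r : Fin (n + 1) → ℤ}
    (h : RankAscending E r π) : π = blockwiseSort E π r := by
  refine Tuple.eq_sort_of_strictMono (Fin.strictMono_iff_lt_succ.2 fun p => ?_)
  simp only [Function.comp_apply, blockKey_apply_self, Prod.Lex.toLex_lt_toLex, Fin.val_succ,
    Fin.val_castSucc, blockIdx_succ]
  by_cases hp : (p : ℕ) + 1 ∈ E
  · simp [hp]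
  · simp [hp, h p hp]

/-- Re-sorting every block by the other rank is the bijection. -/
lemma card_rankAscending {r r' : Fin (n + 1) → ℤ} (hr : Function.Injective r)
    (hr' : Function.Injective r') :
    #{π | RankAscending E r π} = #{π | RankAscending E r' π} := by
  refine card_nbij' (blockwiseSort E · r') (blockwiseSort E · r)
    (fun π _ => by simpa using rankAscending_blockwiseSort π hr')
    (fun π _ => by simpa using rankAscending_blockwiseSort π hr) (fun π hπ => ?_) (fun π hπ => ?_)
  all_goals
    dsimp only
    rw [blockwiseSort_blockwiseSort]
    exact (eq_blockwiseSort_of_rankAscending (by simpa using hπ)).symm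

end BlockwiseSort

section DoubleCounting

variable {n : ℕ}

lemma forall_mem_Icc_one_iff {P : ℕ → Prop} : (∀ i ∈ Icc 1 n, P i) ↔ ∀ p : Fin n, P (p + 1) := by
  refine ⟨fun h p => h _ (mem_Icc.2 ⟨by omega, p.isLt⟩), fun h i hi => ?_⟩
  obtain ⟨h1, h2⟩ := mem_Icc.1 hi
  simpa [Nat.sub_add_cancel h1] using h ⟨i - 1, by omega⟩

lemma isDescent_succ (π : Equiv.Perm (Fin (n + 1))) (p : Fin n) :
    IsDescent π (p + 1) ↔ π p.succ < π p.castSucc := by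
  rw [IsDescent, Nat.add_sub_cancel, ← Fin.val_succ, ← Fin.val_castSucc p, valAt_val, valAt_val,
    Fin.val_fin_lt]

lemma descentSet_subset_iff (E : Finset ℕ) (σ : Equiv.Perm (Fin (n + 1))) :
    descentSet n σ ⊆ E ↔ RankAscending E (fun x => (x : ℤ)) σ := by
  have : descentSet n σ ⊆ E ↔ ∀ i ∈ Icc 1 n, IsDescent σ i → i ∈ E := by
    simp [descentSet, subset_iff]
  rw [this, forall_mem_Icc_one_iff]
  refine forall_congr' fun p => ?_
  rw [isDescent_succ, Int.ofNat_lt, Fin.val_fin_lt]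
  have hne : σ p.castSucc ≠ σ p.succ := σ.injective.ne (Fin.castSucc_lt_succ).ne
  constructor
  · exact fun h hp => (lt_or_gt_of_ne hne).resolve_right fun h' => hp (h h')
  · exact fun h h' => by_contra fun hp => lt_asymm h' (h hp)

/-- Unmarked values come first in decreasing order, then the values in `W` in increasing order. -/
def valleyRank (W : Finset ℕ) (x : Fin (n + 1)) : ℤ := if (x : ℕ) ∈ W then x else -x - 1

lemma valleyRank_injective (W : Finset ℕ) : Function.Injective (valleyRank (n := n) W) :=
  fun x y h => Fin.ext (by unfold valleyRank at h; split_ifs at h <;> omega)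

lemma signRule_iff_valleyRank_lt (W : Finset ℕ) {x y : Fin (n + 1)} (hxy : x ≠ y) :
    SignRule ((x : ℕ) ∈ W) ((y : ℕ) ∈ W) (y < x) ↔ valleyRank W x < valleyRank W y := by
  have := Fin.val_ne_of_ne hxy
  rw [Fin.lt_def]
  by_cases hx : (x : ℕ) ∈ W <;> by_cases hy : (y : ℕ) ∈ W <;>
    simp [SignRule, valleyRank, hx, hy] <;> omega

def positionsOf (π : Equiv.Perm (Fin (n + 1))) (W : Finset ℕ) : Finset ℕ :=
  {j ∈ range (n + 1) | valAt π j ∈ W}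

lemma val_mem_positionsOf (π : Equiv.Perm (Fin (n + 1))) (W : Finset ℕ) (x : Fin (n + 1)) :
    (x : ℕ) ∈ positionsOf π W ↔ (π x : ℕ) ∈ W := by
  simp [positionsOf, x.isLt]

lemma positionsOf_inv_positionsOf (π : Equiv.Perm (Fin (n + 1))) {W : Finset ℕ}
    (hW : W ⊆ range (n + 1)) : positionsOf π⁻¹ (positionsOf π W) = W := by
  ext x
  by_cases hx : x < n + 1
  · have h := val_mem_positionsOf π⁻¹ (positionsOf π W) ⟨x, hx⟩
    rwa [val_mem_positionsOf π W, Equiv.Perm.coe_inv, Equiv.apply_symm_apply] at h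
  · exact iff_of_false (fun h => hx (mem_range.1 (filter_subset _ _ h)))
      fun h => hx (mem_range.1 (hW h))

lemma isValleyMarking_positionsOf_iff (E W : Finset ℕ) (π : Equiv.Perm (Fin (n + 1))) :
    IsValleyMarking (IsDescent π) n E (positionsOf π W) ↔ RankAscending E (valleyRank W) π := by
  rw [IsValleyMarking, forall_mem_Icc_one_iff]
  refine forall_congr' fun p => imp_congr_right fun _ => ?_
  rw [Nat.add_sub_cancel, isDescent_succ, ← Fin.val_succ, ← Fin.val_castSucc p,
    val_mem_positionsOf, val_mem_positionsOf]
  exact signRule_iff_valleyRank_lt W (π.injective.ne Fin.castSucc_lt_succ.ne)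

/-- Marking positions of `π` is the same as marking values. -/
lemma card_valleyMarkings_eq_card_rankAscending (E : Finset ℕ) (π : Equiv.Perm (Fin (n + 1))) :
    #{V ∈ (range (n + 1)).powerset | IsValleyMarking (IsDescent π) n E V} =
      #{W ∈ (range (n + 1)).powerset | RankAscending E (valleyRank W) π} := by
  have hinv : ∀ V ⊆ range (n + 1), positionsOf π (positionsOf π⁻¹ V) = V := fun V hV => by
    simpa using positionsOf_inv_positionsOf π⁻¹ hV
  refine card_nbij' (positionsOf π⁻¹) (positionsOf π) (fun V hV => ?_) (fun W hW => ?_)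
    (fun V hV => hinv V (mem_powerset.1 (mem_filter.1 hV).1))
    (fun W hW => positionsOf_inv_positionsOf π (mem_powerset.1 (mem_filter.1 hW).1))
  · obtain ⟨hV, hmark⟩ := mem_filter.1 hV
    refine mem_filter.2 ⟨mem_powerset.2 (filter_subset _ _), ?_⟩
    rwa [← isValleyMarking_positionsOf_iff, hinv V (mem_powerset.1 hV)]
  · obtain ⟨hW, hasc⟩ := mem_filter.1 hW
    exact mem_filter.2 ⟨mem_powerset.2 (filter_subset _ _),
      (isValleyMarking_positionsOf_iff E W π).2 hasc⟩

theorem two_pow_mul_card_blocksS_peakSet {E : Finset ℕ} (hE : E ⊆ Icc 1 n) :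
    2 ^ (#E + 1) * #{π : Equiv.Perm (Fin (n + 1)) | blocksS (peakSet n π) E} =
      2 ^ (n + 1) * #{π : Equiv.Perm (Fin (n + 1)) | descentSet n π ⊆ E} := by
  have hval : Function.Injective fun x : Fin (n + 1) => (x : ℤ) :=
    Nat.cast_injective.comp Fin.val_injective
  calc 2 ^ (#E + 1) * #{π : Equiv.Perm (Fin (n + 1)) | blocksS (peakSet n π) E}
      = ∑ π : Equiv.Perm (Fin (n + 1)),
          #{V ∈ (range (n + 1)).powerset | IsValleyMarking (IsDescent π) n E V} := by
        simp only [card_valleyMarkings _ E hE, ← peakSet_eq_peaksOf, sum_ite, sum_const_zero,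
          sum_const, smul_eq_mul, add_zero, mul_comm]
    _ = ∑ π : Equiv.Perm (Fin (n + 1)),
          #{W ∈ (range (n + 1)).powerset | RankAscending E (valleyRank W) π} :=
        sum_congr rfl fun π _ => card_valleyMarkings_eq_card_rankAscending E π
    _ = ∑ W ∈ (range (n + 1)).powerset, #{π | RankAscending E (valleyRank W) π} := by
        simp only [card_filter]
        exact sum_comm
    _ = ∑ W ∈ (range (n + 1)).powerset, #{π | RankAscending E (fun x => (x : ℤ)) π} :=
        sum_congr rfl fun W _ => card_rankAscending (valleyRank_injective W) hval
    _ = 2 ^ (n + 1) * #{π : Equiv.Perm (Fin (n + 1)) | descentSet n π ⊆ E} := by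
        simp [descentSet_subset_iff, card_powerset]

end DoubleCounting

section SignedSums

lemma sum_powerset_insert_neg_one_pow {α : Type*} [DecidableEq α] {r : α} {R : Finset α}
    (hr : r ∉ R) (f : Finset α → ℤ) :
    ∑ E ∈ (insert r R).powerset, (-1) ^ #(insert r R \ E) * f E =
      ∑ E ∈ R.powerset, (-1) ^ #(R \ E) * (f (insert r E) - f E) := by
  rw [sum_powerset_insert hr, ← sum_add_distrib]
  refine sum_congr rfl fun E hE => ?_
  have hrE : r ∉ E := fun h => hr (mem_powerset.1 hE h)
  rw [insert_sdiff_of_notMem _ hrE, card_insert_of_notMem fun h => hr (mem_sdiff.1 h).1,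
    insert_sdiff_insert, sdiff_insert_of_notMem hr]
  ring

lemma sum_powerset_neg_one_pow_mul_ite_subset {α : Type*} [DecidableEq α] (D R : Finset α) :
    ∑ E ∈ R.powerset, (-1 : ℤ) ^ #(R \ E) * (if D ⊆ E then 1 else 0) = if D = R then 1 else 0 := by
  induction R using Finset.induction_on generalizing D with
  | empty =>
    rw [powerset_empty, sum_singleton]
    simp [subset_empty]
  | insert r R hr ih =>
    simp only [sum_powerset_insert_neg_one_pow hr, mul_sub, sum_sub_distrib, subset_insert_iff, ih]
    by_cases hD : r ∈ D
    · have : D ≠ R := fun h => hr (h ▸ hD)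
      simp only [this, if_false, sub_zero]
      exact if_congr ⟨fun h => by rw [← h, insert_erase hD], fun h => by rw [h, erase_insert hr]⟩
        rfl rfl
    · rw [erase_eq_of_notMem hD, sub_self,
        if_neg fun h : D = insert r R => hD (h ▸ mem_insert_self r R)]

section PairSplitting

variable {P X : Finset ℕ} {r : ℕ}

lemma blocksS_insert_of_forall (h : ∀ i ∈ P, i - 1 ≠ r ∧ i ≠ r) :
    blocksS P (insert r X) ↔ blocksS P X :=
  forall₂_congr fun i hi => by simp [mem_insert, (h i hi).1, (h i hi).2]

lemma forall_xor_insert_of_forall (h : ∀ i ∈ P, i - 1 ≠ r ∧ i ≠ r) :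
    (∀ i ∈ P, Xor (i - 1 ∈ insert r X) (i ∈ insert r X)) ↔ ∀ i ∈ P, Xor (i - 1 ∈ X) (i ∈ X) :=
  forall₂_congr fun i hi => by simp [mem_insert, (h i hi).1, (h i hi).2]

/-- `r` lies in the pair of some `i₀ ∈ P`, whose other element is `o`, and in no other pair. -/
lemma exists_pair_containing (h0 : 0 ∉ P) (hs : ∀ i ∈ P, i - 1 ∉ P)
    (hr : ¬ ∀ i ∈ P, i - 1 ≠ r ∧ i ≠ r) :
    ∃ i₀ ∈ P, ∃ o ≠ r,
      (∀ X : Finset ℕ, ((i₀ - 1 ∈ X ∨ i₀ ∈ X) ↔ (r ∈ X ∨ o ∈ X)) ∧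
        (Xor (i₀ - 1 ∈ X) (i₀ ∈ X) ↔ Xor (r ∈ X) (o ∈ X))) ∧
      ∀ i ∈ P.erase i₀, i - 1 ≠ r ∧ i ≠ r := by
  push Not at hr
  obtain ⟨i₀, hi₀, hr₀⟩ := hr
  have hpos : ∀ i ∈ P, i ≠ 0 := fun i hi h => h0 (h ▸ hi)
  by_cases h : i₀ = r
  · subst h
    refine ⟨i₀, hi₀, i₀ - 1, by have := hpos i₀ hi₀; omega,
      fun X => ⟨or_comm, by rw [_root_.xor_comm]⟩, fun i hi => ?_⟩
    obtain ⟨hne, hiP⟩ := mem_erase.1 hi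
    exact ⟨fun h' => hs i hiP (h' ▸ hi₀), hne⟩
  · have h' : i₀ - 1 = r := not_not.1 (mt hr₀ h)
    refine ⟨i₀, hi₀, i₀, h, fun X => by rw [h']; exact ⟨Iff.rfl, Iff.rfl⟩, fun i hi => ?_⟩
    obtain ⟨hne, hiP⟩ := mem_erase.1 hi
    have := hpos i hiP
    have := hpos i₀ hi₀
    exact ⟨fun h'' => hne (by omega), fun h'' => hs i₀ hi₀ (h' ▸ h'' ▸ hiP)⟩

/-- Inclusion–exclusion over the disjoint pairs `{i - 1, i}`, `i ∈ P`. -/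
theorem sum_powerset_neg_one_pow_mul_blocksS (R : Finset ℕ) :
    ∀ P : Finset ℕ, 0 ∉ P → (∀ i ∈ P, i - 1 ∉ P) →
      ∑ E ∈ R.powerset, (-1 : ℤ) ^ #(R \ E) * (if blocksS P E then 2 ^ (#E + 1) else 0) =
        if ∀ i ∈ P, Xor (i - 1 ∈ R) (i ∈ R) then 2 ^ (#P + 1) else 0 := by
  induction R using Finset.induction_on with
  | empty =>
    intro P _ _
    rw [powerset_empty, sum_singleton]
    rcases P.eq_empty_or_nonempty with rfl | ⟨i, hi⟩
    · simp [blocksS]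
    · have hb : ¬ blocksS P ∅ := fun h => by simpa using h i hi
      have hx : ¬ ∀ i ∈ P, Xor (i - 1 ∈ (∅ : Finset ℕ)) (i ∈ (∅ : Finset ℕ)) := fun h => by
        simpa using h i hi
      rw [if_neg hb, if_neg hx]
      simp
  | insert r R hr ih =>
    intro P h0 hs
    have hcard : ∀ E ∈ R.powerset, #(insert r E) = #E + 1 := fun E hE =>
      card_insert_of_notMem fun h => hr (mem_powerset.1 hE h)
    rw [sum_powerset_insert_neg_one_pow hr]
    by_cases hA : ∀ i ∈ P, i - 1 ≠ r ∧ i ≠ r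
    · simp only [forall_xor_insert_of_forall hA, ← ih P h0 hs]
      refine sum_congr rfl fun E hE => ?_
      simp only [blocksS_insert_of_forall hA, hcard E hE]
      split_ifs <;> ring
    obtain ⟨i₀, hi₀, o, hor, hpair, havoid⟩ := exists_pair_containing h0 hs hA
    have hP : insert i₀ (P.erase i₀) = P := insert_erase hi₀
    have hblocks : ∀ X, blocksS P X ↔ (r ∈ X ∨ o ∈ X) ∧ blocksS (P.erase i₀) X := fun X => by
      unfold blocksS
      rw [← (hpair X).1, ← forall_mem_insert (p := fun i => i - 1 ∈ X ∨ i ∈ X), hP]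
    have hxor : ∀ X : Finset ℕ, (∀ i ∈ P, Xor (i - 1 ∈ X) (i ∈ X)) ↔
        Xor (r ∈ X) (o ∈ X) ∧ ∀ i ∈ P.erase i₀, Xor (i - 1 ∈ X) (i ∈ X) := fun X => by
      rw [← (hpair X).2, ← forall_mem_insert (p := fun i => Xor (i - 1 ∈ X) (i ∈ X)), hP]
    have ih' := ih (P.erase i₀) (fun h => h0 (mem_of_mem_erase h))
      fun i hi h => hs i (mem_of_mem_erase hi) (mem_of_mem_erase h)
    calc _ = 2 * ∑ E ∈ R.powerset, (-1 : ℤ) ^ #(R \ E) *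
            (if blocksS (P.erase i₀) E then 2 ^ (#E + 1) else 0) -
          ∑ E ∈ R.powerset, (-1 : ℤ) ^ #(R \ E) * (if blocksS P E then 2 ^ (#E + 1) else 0) := by
          rw [mul_sum, ← sum_sub_distrib]
          refine sum_congr rfl fun E hE => ?_
          simp only [hblocks (insert r E), blocksS_insert_of_forall havoid, hcard E hE,
            mem_insert_self, true_or, true_and]
          split_ifs <;> ring
      _ = _ := by
          rw [ih', ih P h0 hs, ← card_erase_add_one hi₀]
          have hxr : Xor (r ∈ insert r R) (o ∈ insert r R) ↔ o ∉ R := by simp [hor]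
          have hxr' : Xor (r ∈ R) (o ∈ R) ↔ o ∈ R := by simp [hr]
          simp only [hxor (insert r R), hxor R, forall_xor_insert_of_forall havoid, hxr, hxr']
          by_cases ho : o ∈ R <;> simp only [ho, not_true_eq_false, not_false_eq_true, true_and,
            false_and, if_false, sub_zero] <;> split_ifs <;> ring

end PairSplitting

end SignedSums

section PeakSums

variable {n : ℕ}

theorem sum_two_pow_peakSet_of_xor {R : Finset ℕ} (hR : R ⊆ Icc 1 n) :
    ∑ π ∈ {π : Equiv.Perm (Fin (n + 1)) | ∀ i ∈ peakSet n π, Xor (i - 1 ∈ R) (i ∈ R)},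
        2 ^ (#(peakSet n π) + 1) =
      2 ^ (n + 1) * #{π : Equiv.Perm (Fin (n + 1)) | descentSet n π = R} := by
  have hzero : ∀ π, 0 ∉ peakSet n π := fun π h => by
    simpa using (leftSparse_peakSet π).1 h
  have hkey : ∀ E ∈ R.powerset,
      (2 ^ (#E + 1) * #{π : Equiv.Perm (Fin (n + 1)) | blocksS (peakSet n π) E} : ℤ) =
        2 ^ (n + 1) * #{π : Equiv.Perm (Fin (n + 1)) | descentSet n π ⊆ E} := fun E hE => by
    exact_mod_cast two_pow_mul_card_blocksS_peakSet ((mem_powerset.1 hE).trans hR)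
  apply Nat.cast_injective (R := ℤ)
  push_cast
  calc ∑ π ∈ {π : Equiv.Perm (Fin (n + 1)) | ∀ i ∈ peakSet n π, Xor (i - 1 ∈ R) (i ∈ R)},
        (2 : ℤ) ^ (#(peakSet n π) + 1)
      = ∑ π : Equiv.Perm (Fin (n + 1)), ∑ E ∈ R.powerset,
          (-1) ^ #(R \ E) * (if blocksS (peakSet n π) E then 2 ^ (#E + 1) else 0) := by
        rw [sum_filter]
        exact sum_congr rfl fun π _ => (sum_powerset_neg_one_pow_mul_blocksS R _ (hzero π)
          (leftSparse_peakSet π).2.2).symm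
    _ = ∑ E ∈ R.powerset,
          (-1) ^ #(R \ E) *
            (2 ^ (#E + 1) * (#{π : Equiv.Perm (Fin (n + 1)) | blocksS (peakSet n π) E} : ℤ)) := by
        rw [sum_comm]
        refine sum_congr rfl fun E _ => ?_
        rw [← mul_sum, ← sum_filter, sum_const, nsmul_eq_mul]
        ring
    _ = 2 ^ (n + 1) * ∑ E ∈ R.powerset, ∑ π : Equiv.Perm (Fin (n + 1)),
          (-1) ^ #(R \ E) * (if descentSet n π ⊆ E then 1 else 0) := by
        rw [mul_sum]
        refine sum_congr rfl fun E hE => ?_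
        rw [hkey E hE, card_filter]
        push_cast
        simp only [mul_sum]
        exact sum_congr rfl fun _ _ => by ring
    _ = 2 ^ (n + 1) * ∑ π : Equiv.Perm (Fin (n + 1)), ∑ E ∈ R.powerset,
          (-1) ^ #(R \ E) * (if descentSet n π ⊆ E then 1 else 0) := by
        rw [sum_comm]
    _ = 2 ^ (n + 1) * #{π : Equiv.Perm (Fin (n + 1)) | descentSet n π = R} := by
        simp only [sum_powerset_neg_one_pow_mul_ite_subset, sum_boole]

lemma peakSet_subset (π : Equiv.Perm (Fin (n + 1))) : peakSet n π ⊆ Icc 2 n :=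
  filter_subset _ _

lemma blocksS_and_blocksS_sdiff_iff {P R : Finset ℕ} (hP : P ⊆ Icc 2 n) :
    blocksS P R ∧ blocksS P (Icc 1 n \ R) ↔ ∀ i ∈ P, Xor (i - 1 ∈ R) (i ∈ R) := by
  simp only [blocksS, ← forall₂_and]
  refine forall₂_congr fun i hi => ?_
  have := mem_Icc.1 (hP hi)
  have h1 : 1 ≤ i - 1 ∧ i - 1 ≤ n := by omega
  have h2 : 1 ≤ i ∧ i ≤ n := by omega
  simp only [mem_sdiff, mem_Icc, h1, h2, true_and, Xor]
  tauto

lemma eta_peakSet (T : Finset ℕ) (π : Equiv.Perm (Fin (n + 1))) :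
    eta n T (peakSet n π) =
      #{R ∈ (Icc 1 n).powerset | Lam R = T ∧ ∀ i ∈ peakSet n π, Xor (i - 1 ∈ R) (i ∈ R)} := by
  refine congrArg card (filter_congr fun R _ => ?_)
  rw [← blocksS_and_blocksS_sdiff_iff (peakSet_subset π)]
  tauto

lemma pCount_eq_sum_card_descentSet (T : Finset ℕ) :
    pCount n T = ∑ R ∈ (Icc 1 n).powerset with Lam R = T,
      #{π : Equiv.Perm (Fin (n + 1)) | descentSet n π = R} := by
  have hmaps : ∀ π ∈ ({π | Lam (descentSet n π) = T} : Finset (Equiv.Perm (Fin (n + 1)))),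
      descentSet n π ∈ {R ∈ (Icc 1 n).powerset | Lam R = T} := fun π hπ =>
    mem_filter.2 ⟨mem_powerset.2 (filter_subset _ _), (mem_filter.1 hπ).2⟩
  simp only [pCount, peakSet_eq_Lam]
  rw [card_eq_sum_card_fiberwise hmaps]
  refine sum_congr rfl fun R hR => congrArg card ?_
  rw [filter_filter]
  exact filter_congr fun π _ => and_iff_right_of_imp fun h => h ▸ (mem_filter.1 hR).2

end PeakSums

end PeakEigenvector

theorem stmt_15_general (n : ℕ) (T : Finset ℕ) :
    ∑ S ∈ (Finset.Icc 1 n).powerset.filter (LeftSparse n),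
        2 ^ (S.card + 1) * eta n T S * pCount n S
      = 2 ^ (n + 1) * pCount n T := by
  open Finset PeakEigenvector in
  have hmaps : ∀ π ∈ (univ : Finset (Equiv.Perm (Fin (n + 1)))),
      peakSet n π ∈ (Icc 1 n).powerset.filter (LeftSparse n) := fun π _ =>
    mem_filter.2 ⟨mem_powerset.2 (leftSparse_peakSet π).1, leftSparse_peakSet π⟩
  calc _ = ∑ π : Equiv.Perm (Fin (n + 1)), 2 ^ (#(peakSet n π) + 1) * eta n T (peakSet n π) := by
        rw [← sum_fiberwise_of_maps_to' hmaps fun S => 2 ^ (#S + 1) * eta n T S]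
        exact sum_congr rfl fun S _ => by rw [sum_const, smul_eq_mul, pCount, mul_comm]
    _ = ∑ π : Equiv.Perm (Fin (n + 1)), ∑ R ∈ (Icc 1 n).powerset with Lam R = T,
          if ∀ i ∈ peakSet n π, Xor (i - 1 ∈ R) (i ∈ R) then 2 ^ (#(peakSet n π) + 1) else 0 := by
        refine sum_congr rfl fun π _ => ?_
        rw [eta_peakSet, ← filter_filter, card_filter, mul_sum]
        simp only [mul_ite, mul_one, mul_zero]
    _ = ∑ R ∈ (Icc 1 n).powerset with Lam R = T,
          2 ^ (n + 1) * #{π : Equiv.Perm (Fin (n + 1)) | descentSet n π = R} := by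
        rw [sum_comm]
        refine sum_congr rfl fun R hR => ?_
        rw [← sum_two_pow_peakSet_of_xor (mem_powerset.1 (mem_filter.1 hR).1), sum_filter]
    _ = 2 ^ (n + 1) * pCount n T := by rw [← mul_sum, pCount_eq_sum_card_descentSet]

/-- the peak-set distribution `(p_S)` of `S_{n+1}` is an eigenvector
with eigenvalue `2^{n+1}` of the matrix `(2^{|S|+1} η_{T,S})`: for every left
sparse `T ⊆ [n]`, `Σ_{S left sparse} 2^{|S|+1} η_{T,S} p_S = 2^{n+1} p_T`. -/
theorem stmt_15 (n : ℕ) (T : Finset ℕ) (hT : LeftSparse n T) :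
    ∑ S ∈ (Finset.Icc 1 n).powerset.filter (LeftSparse n),
        2 ^ (S.card + 1) * eta n T S * pCount n S
      = 2 ^ (n + 1) * pCount n T :=
  stmt_15_general n T
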